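/- arXiv:1710.10112 — 3 statements merged into one kernel-verified Lean document; each statement's English description precedes it below -/
import Mathlib

section
/- If a finite connected graph G contains a cut vertex, then c_H(G) ≤ c(G) + 1. -/
/-!
Let `v` be the cut vertex. One extra cop, the guard, keeps the robber visible, so that the other
`c(G)` cops can play a winning strategy of the ordinary game, started at `v`. For each vertex `u`
let `away u` be a neighbour of `v` on another side of `v` than `u`. The main cops wait at `v` for
three rounds, so the robber cannot cross `v` meanwhile, while the guard finds out the robber's
side (from a sighting, or else from the robber hiding next to the probe position `away v`) and
walks through `v` to the post `away` of that side. From then on the robber is confined to its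
side, so it is never adjacent to the guard and is always seen, unless it steps on `v`, where the
guard catches it. The main cops therefore observe an honest robber trajectory from round three on.
-/

/-- A single move in (reflexive) Cops and Robbers: stay put or move to an adjacent vertex. -/
def CRStep {V : Type*} (G : SimpleGraph V) (u v : V) : Prop := u = v ∨ G.Adj u v

/-- The list of the robber's first `n` positions. -/
def robberHist {V : Type*} (r : ℕ → V) (n : ℕ) : List V := (List.range n).map r

/-- `k` cops have a winning strategy in (perfect-information) Cops and Robbers on `G`.
A cop strategy `F` assigns to every history of robber positions the positions of the `k` cops;
`F []` is the initial placement of the cops, chosen before the robber picks a start vertex,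
and consecutive cop positions must be legal moves.  Given a robber trajectory `r`
(every consecutive pair a legal move), the positions of the cops after their `n`-th move are
`F (robberHist r n)`.  The cops win if at some moment (after a cop move or after a robber
move) some cop occupies the robber's current vertex. -/
def CopsWin {V : Type*} (G : SimpleGraph V) (k : ℕ) : Prop :=
  ∃ F : List V → Fin k → V,
    (∀ l x i, CRStep G (F l i) (F (l ++ [x]) i)) ∧
    ∀ r : ℕ → V, (∀ n, CRStep G (r n) (r (n + 1))) →
      ∃ n, ∃ i, F (robberHist r n) i = r n ∨ F (robberHist r (n + 1)) i = r n

/-- The cop number of `G`: the least number of cops having a winning strategy. -/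
noncomputable def copNumber {V : Type*} (G : SimpleGraph V) : ℕ := sInf {k | CopsWin G k}

open Classical in
/-- The first `n` observations made by hyperopic cops using strategy `F` against the robber
trajectory `r`: after the robber's `n`-th move, the cops (positioned at `F` applied to the
previous observations) see the robber (observation `some (r n)`) unless the robber is
adjacent to every cop (observation `none`). -/
noncomputable def hObsList {V : Type*} (G : SimpleGraph V) {k : ℕ}
    (F : List (Option V) → Fin k → V) (r : ℕ → V) : ℕ → List (Option V)
  | 0 => []
  | n + 1 =>
      hObsList G F r n ++
        [if ∀ i, G.Adj (F (hObsList G F r n) i) (r n) then none else some (r n)]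

/-- `k` cops have a winning strategy in Hyperopic Cops and Robbers on `G`: a strategy
`F`, depending only on the history of observations (the robber being invisible exactly
when adjacent to every cop), which guarantees capture against every robber trajectory. -/
def HCopsWin {V : Type*} (G : SimpleGraph V) (k : ℕ) : Prop :=
  ∃ F : List (Option V) → Fin k → V,
    (∀ l o i, CRStep G (F l i) (F (l ++ [o]) i)) ∧
    ∀ r : ℕ → V, (∀ n, CRStep G (r n) (r (n + 1))) →
      ∃ n, ∃ i, F (hObsList G F r n) i = r n ∨ F (hObsList G F r (n + 1)) i = r n

/-- The hyperopic cop number of `G`: the least number of cops having a winning strategy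
in Hyperopic Cops and Robbers. -/
noncomputable def hyperopicCopNumber {V : Type*} (G : SimpleGraph V) : ℕ :=
  sInf {k | HCopsWin G k}

open SimpleGraph

section CopsAndRobbers

variable {V : Type*} {G : SimpleGraph V} {k : ℕ}

theorem CRStep.refl (G : SimpleGraph V) (u : V) : CRStep G u u := Or.inl rfl

theorem SimpleGraph.Walk.crStep_getVert {u w : V} (p : G.Walk u w) (j : ℕ) :
    CRStep G (p.getVert j) (p.getVert (j + 1)) := by
  rcases lt_or_ge j p.length with h | h
  · exact Or.inr (p.adj_getVert_succ h)
  · exact Or.inl (by rw [p.getVert_of_length_le h, p.getVert_of_length_le (by omega)])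

section Strategies

def IsTrajectory (G : SimpleGraph V) (r : ℕ → V) : Prop := ∀ n, CRStep G (r n) (r (n + 1))

def IsLegalStrategy {α : Type*} (G : SimpleGraph V) (F : List α → Fin k → V) : Prop :=
  ∀ l a i, CRStep G (F l i) (F (l ++ [a]) i)

def CatchesAll (G : SimpleGraph V) (F : List V → Fin k → V) : Prop :=
  ∀ r, IsTrajectory G r →
    ∃ n i, F (robberHist r n) i = r n ∨ F (robberHist r (n + 1)) i = r n

theorem IsTrajectory.shift {r : ℕ → V} (hr : IsTrajectory G r) (L : ℕ) :
    IsTrajectory G (fun j => r (L + j)) :=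
  fun n => hr (L + n)

theorem CatchesAll.pos [Nonempty V] {F : List V → Fin k → V} (hF : CatchesAll G F) :
    0 < k := by
  obtain ⟨-, i, -⟩ := hF (fun _ => Classical.arbitrary V) fun _ => CRStep.refl G _
  exact i.pos

theorem drop_robberHist_add (r : ℕ → V) (L m : ℕ) :
    (robberHist r (L + m)).drop L = robberHist (fun j => r (L + j)) m := by
  simp [robberHist, List.range_add]

theorem copsWin_card [Fintype V] (G : SimpleGraph V) : CopsWin G (Fintype.card V) :=
  ⟨fun _ i => (Fintype.equivFin V).symm i, fun _ _ _ => CRStep.refl G _,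
    fun r _ => ⟨0, Fintype.equivFin V (r 0), Or.inl (by simp)⟩⟩

end Strategies

section Approach

variable {s : Fin k → V} {F : List V → Fin k → V}

def approachThen (p : ∀ i, G.Walk (s i) (F [] i)) (L : ℕ) (l : List V) (i : Fin k) : V :=
  if l.length ≤ L then (p i).getVert l.length else F (l.drop L) i

variable {p : ∀ i, G.Walk (s i) (F [] i)} {L : ℕ}

theorem approachThen_of_le (hp : ∀ i, (p i).length ≤ L) {l : List V} (h : L ≤ l.length)
    (i : Fin k) : approachThen p L l i = F (l.drop L) i := by
  unfold approachThen
  split_ifs with h'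
  · rw [(p i).getVert_of_length_le (by have := hp i; omega), List.drop_eq_nil_of_le (by omega)]
  · rfl

theorem isLegalStrategy_approachThen (hF : IsLegalStrategy G F) (hp : ∀ i, (p i).length ≤ L) :
    IsLegalStrategy G (approachThen p L) := by
  intro l x i
  rcases lt_or_ge l.length L with h | h
  · simpa [approachThen, h.le, h] using (p i).crStep_getVert l.length
  · rw [approachThen_of_le hp h, approachThen_of_le hp (by simp; omega),
      List.drop_append_of_le_length h]
    exact hF _ _ _

theorem catchesAll_approachThen (hF : CatchesAll G F) (hp : ∀ i, (p i).length ≤ L) :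
    CatchesAll G (approachThen p L) := by
  intro r hr
  obtain ⟨m, i, hcatch⟩ := hF _ (hr.shift L)
  refine ⟨L + m, i, ?_⟩
  rwa [approachThen_of_le hp (by simp [robberHist]),
    approachThen_of_le hp (by simp [robberHist]; omega), add_assoc, drop_robberHist_add,
    drop_robberHist_add]

end Approach

theorem CopsWin.exists_strategy_start (h : CopsWin G k) (hG : G.Connected) (s : Fin k → V) :
    ∃ F : List V → Fin k → V, IsLegalStrategy G F ∧ CatchesAll G F ∧ F [] = s := by
  obtain ⟨F, hlegal, hwin⟩ :
    ∃ F : List V → Fin k → V, IsLegalStrategy G F ∧ CatchesAll G F := h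
  let p i : G.Walk (s i) (F [] i) := (hG (s i) (F [] i)).some
  have hp i : (p i).length ≤ Finset.univ.sup fun i => (p i).length :=
    Finset.le_sup (f := fun i => (p i).length) (Finset.mem_univ i)
  refine ⟨approachThen p _, isLegalStrategy_approachThen hlegal hp,
    catchesAll_approachThen hwin hp, ?_⟩
  ext i
  simp [approachThen]

section CutVertex

variable {v x y : V}

theorem reachable_deleteIncidenceSet_of_adj (hx : x ≠ v) (hy : y ≠ v) (h : G.Adj x y) :
    (G.deleteIncidenceSet v).Reachable x y :=
  (deleteIncidenceSet_adj.2 ⟨h, hx, hy⟩).reachable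

theorem SimpleGraph.Connected.exists_adj_reachable_deleteIncidenceSet (hG : G.Connected)
    (hx : x ≠ v) : ∃ b, G.Adj v b ∧ (G.deleteIncidenceSet v).Reachable x b := by
  obtain ⟨p⟩ := hG x v
  induction p with
  | nil => exact absurd rfl hx
  | @cons x u v hxu q ih =>
    by_cases hu : u = v
    · exact ⟨x, hu ▸ hxu.symm, Reachable.refl x⟩
    · obtain ⟨b, hvb, hub⟩ := ih hu
      exact ⟨b, hvb, (reachable_deleteIncidenceSet_of_adj hx hu hxu).trans hub⟩

theorem SimpleGraph.Reachable.induce_compl_singleton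
    (h : (G.deleteIncidenceSet v).Reachable x y) (hx : x ≠ v) (hy : y ≠ v) :
    (G.induce {v}ᶜ).Reachable ⟨x, hx⟩ ⟨y, hy⟩ := by
  obtain ⟨p⟩ := h
  have hsupp : ∀ w ∈ p.support, w ∈ ({v}ᶜ : Set V) := by
    intro w hw hwv
    rcases Walk.mem_support_iff_exists_mem_edges.1 hw with rfl | ⟨e, he, hwe⟩
    · exact hy hwv
    · have := edgeSet_deleteIncidenceSet G v ▸ p.edges_subset_edgeSet he
      exact this.2 ⟨this.1, hwv ▸ hwe⟩
  have q := p.induce {v}ᶜ hsupp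
  rw [induce_deleteIncidenceSet_of_notMem G (by simp)] at q
  exact ⟨q⟩

theorem exists_not_reachable_deleteIncidenceSet (hv : ¬(G.induce {v}ᶜ).Connected)
    (hx : x ≠ v) : ∃ y, y ≠ v ∧ ¬(G.deleteIncidenceSet v).Reachable x y := by
  by_contra! h
  refine hv ((connected_iff _).2 ⟨fun a b => ?_, ⟨⟨x, hx⟩⟩⟩)
  exact ((h a a.2).symm.trans (h b b.2)).induce_compl_singleton a.2 b.2

theorem IsTrajectory.reachable_deleteIncidenceSet {r : ℕ → V} (hr : IsTrajectory G r)
    (hrv : ∀ n, r n ≠ v) {m n : ℕ} (h : m ≤ n) :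
    (G.deleteIncidenceSet v).Reachable (r m) (r n) := by
  induction n, h using Nat.le_induction with
  | base => rfl
  | succ n _ ih =>
    rcases hr n with heq | hadj
    · exact heq ▸ ih
    · exact ih.trans (reachable_deleteIncidenceSet_of_adj (hrv n) (hrv (n + 1)) hadj)

theorem SimpleGraph.Connected.exists_away (hG : G.Connected) (hx : x ≠ v) (hy : y ≠ v)
    (hxy : ¬(G.deleteIncidenceSet v).Reachable x y) :
    ∃ away : V → V, (∀ u, G.Adj v (away u)) ∧
      ∀ u, u ≠ v → ¬(G.deleteIncidenceSet v).Reachable u (away u) := by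
  classical
  obtain ⟨b₁, hvb₁, hxb₁⟩ := hG.exists_adj_reachable_deleteIncidenceSet hx
  obtain ⟨b₂, hvb₂, hyb₂⟩ := hG.exists_adj_reachable_deleteIncidenceSet hy
  have hb : ¬(G.deleteIncidenceSet v).Reachable b₁ b₂ :=
    fun h => hxy (hxb₁.trans (h.trans hyb₂.symm))
  refine ⟨fun u => if (G.deleteIncidenceSet v).Reachable u b₁ then b₂ else b₁,
    fun u => by beta_reduce; split_ifs <;> assumption, fun u _ => ?_⟩
  beta_reduce
  split_ifs with hu
  · exact fun h => hb (hu.symm.trans h)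
  · exact hu

end CutVertex

section Observations

variable {F : List (Option V) → Fin k → V} {r : ℕ → V} {n : ℕ}

open Classical in
noncomputable def hObs (G : SimpleGraph V) (F : List (Option V) → Fin k → V) (r : ℕ → V)
    (n : ℕ) : Option V :=
  if ∀ i, G.Adj (F (hObsList G F r n) i) (r n) then none else some (r n)

theorem hObsList_succ : hObsList G F r (n + 1) = hObsList G F r n ++ [hObs G F r n] := rfl

theorem hObsList_one : hObsList G F r 1 = [hObs G F r 0] := rfl

theorem hObsList_eq_map : hObsList G F r n = (List.range n).map (hObs G F r) := by
  induction n with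
  | zero => rfl
  | succ n ih => rw [hObsList_succ, ih, List.range_succ, List.map_append, List.map_singleton]

theorem hObsList_length : (hObsList G F r n).length = n := by
  simp [hObsList_eq_map]

theorem hObsList_three_add (m : ℕ) :
    hObsList G F r (3 + m) = hObs G F r 0 :: hObs G F r 1 :: hObs G F r 2 ::
      (List.range m).map (fun j => hObs G F r (3 + j)) := by
  simp [hObsList_eq_map, List.range_add, List.range_succ]

theorem hObs_eq_none_or : hObs G F r n = none ∨ hObs G F r n = some (r n) := by
  unfold hObs
  split_ifs
  exacts [Or.inl rfl, Or.inr rfl]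

theorem adj_of_hObs_eq_none (h : hObs G F r n = none) (i : Fin k) :
    G.Adj (F (hObsList G F r n) i) (r n) := by
  unfold hObs at h
  split_ifs at h with hadj
  exact hadj i

def Evades (G : SimpleGraph V) (P : List (Option V) → Fin k → V) (r : ℕ → V) : Prop :=
  ∀ n i, P (hObsList G P r n) i ≠ r n ∧ P (hObsList G P r (n + 1)) i ≠ r n

end Observations

section Strategy

variable (v : V) (away : V → V)

/-- An invisible robber is recorded at `v`: once the guard is at its post, the robber can be
invisible only on `v`, so either way the guard answers by stepping onto `v`. -/
def sightings (l : List (Option V)) : List V := (l.drop 3).map (·.getD v)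

def guardPost (o₀ o₁ : Option V) : V := away ((o₀.or o₁).getD (away v))

def guardRoute : List (Option V) → V
  | [] => v
  | [some x] => away x
  | [none] => away v
  | [some x, _] => away x
  | [none, _] => v
  | o₀ :: o₁ :: _ :: _ => guardPost v away o₀ o₁

def guardPos [DecidableEq V] (l : List (Option V)) : V :=
  if v ∈ sightings v l then v else guardRoute v away l

def cutVertexStrategy [DecidableEq V] (F : List V → Fin k → V) (l : List (Option V)) :
    Fin (k + 1) → V :=
  Fin.snoc (α := fun _ => V) (F (sightings v l)) (guardPos v away l)

variable {v away} {l : List (Option V)} {o : Option V}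

theorem guardRoute_cons_cons_cons (o₀ o₁ o₂ : Option V) (t : List (Option V)) :
    guardRoute v away (o₀ :: o₁ :: o₂ :: t) = guardPost v away o₀ o₁ := by
  simp only [guardRoute]

theorem sightings_of_length_le (h : l.length ≤ 3) : sightings v l = [] := by
  simp [sightings, List.drop_eq_nil_of_le h]

theorem sightings_append (h : 3 ≤ l.length) :
    sightings v (l ++ [o]) = sightings v l ++ [o.getD v] := by
  simp [sightings, List.drop_append_of_le_length h]

theorem sightings_append_of_lt (h : l.length < 3) : sightings v (l ++ [o]) = sightings v l := by
  rw [sightings_of_length_le h.le, sightings_of_length_le (by simp; omega)]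

theorem sightings_hObsList_three_add {P : List (Option V) → Fin k → V} {r : ℕ → V}
    (m : ℕ) :
    sightings v (hObsList G P r (3 + m)) =
      (List.range m).map fun j => (hObs G P r (3 + j)).getD v := by
  simp [sightings, hObsList_three_add]

theorem IsLegalStrategy.comp_sightings {F : List V → Fin k → V} (hF : IsLegalStrategy G F) :
    IsLegalStrategy G (fun l => F (sightings v l)) := by
  intro l o i
  beta_reduce
  rcases lt_or_ge l.length 3 with h | h
  · rw [sightings_append_of_lt h]
    exact CRStep.refl G _
  · rw [sightings_append h]
    exact hF _ _ _

variable (hadj : ∀ u, G.Adj v (away u))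
include hadj

theorem guardRoute_step (l : List (Option V)) (o : Option V) :
    CRStep G (guardRoute v away l) (guardRoute v away (l ++ [o])) := by
  rcases l with _ | ⟨_ | x, _ | ⟨o₁, _ | ⟨o₂, t⟩⟩⟩ <;> rcases o with _ | y <;>
    simp [guardRoute, guardPost, CRStep, hadj, (hadj _).symm]

variable [DecidableEq V]

theorem guardPos_step (l : List (Option V)) (o : Option V) :
    CRStep G (guardPos v away l) (guardPos v away (l ++ [o])) := by
  by_cases hl : v ∈ sightings v l
  · have hl' : v ∈ sightings v (l ++ [o]) := by
      rcases lt_or_ge l.length 3 with h | h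
      · rwa [sightings_append_of_lt h]
      · simp [sightings_append h, hl]
    simpa [guardPos, hl, hl'] using CRStep.refl G v
  · by_cases hl' : v ∈ sightings v (l ++ [o])
    · have h3 : 3 ≤ l.length := by
        by_contra! h
        exact hl (sightings_append_of_lt h ▸ hl')
      rcases l with _ | ⟨o₀, _ | ⟨o₁, _ | ⟨o₂, t⟩⟩⟩
      iterate 3 · simp at h3
      rw [guardPos, guardPos, if_neg hl, if_pos hl', guardRoute_cons_cons_cons]
      exact Or.inr (hadj _).symm
    · simpa [guardPos, hl, hl'] using guardRoute_step hadj l o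

theorem isLegalStrategy_cutVertexStrategy {F : List V → Fin k → V}
    (hF : IsLegalStrategy G F) : IsLegalStrategy G (cutVertexStrategy v away F) := by
  intro l o i
  induction i using Fin.lastCases with
  | last => simpa [cutVertexStrategy] using guardPos_step hadj l o
  | cast i => simpa [cutVertexStrategy] using hF.comp_sightings l o i

end Strategy

section Capture

variable [DecidableEq V] {v : V} {away : V → V} {F : List V → Fin k → V} {r : ℕ → V}

theorem Evades.ne_cutVertex (hk : 0 < k) (hF : F [] = fun _ => v)
    (he : Evades G (cutVertexStrategy v away F) r) (n : ℕ) : r n ≠ v := by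
  intro hrn
  rcases le_or_gt n 3 with hn | hn
  · apply (he n (Fin.castSucc ⟨0, hk⟩)).1
    rw [cutVertexStrategy, Fin.snoc_castSucc,
      sightings_of_length_le (hObsList_length.trans_le hn), hF, hrn]
  · have hseen : v ∈ sightings v (hObsList G (cutVertexStrategy v away F) r (n + 1)) := by
      rw [hObsList_succ, sightings_append (by rw [hObsList_length]; omega)]
      rcases hObs_eq_none_or (G := G) (F := cutVertexStrategy v away F) (r := r) (n := n)
        with h | h <;> simp [h, hrn]
    apply (he n (Fin.last k)).2
    simp [cutVertexStrategy, guardPos, hseen, hrn]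

variable (hadj : ∀ u, G.Adj v (away u))
include hadj

theorem hObs_three_add_eq_some (hrv : ∀ n, r n ≠ v)
    (hpost : ∀ n, 1 ≤ n → ¬(G.deleteIncidenceSet v).Reachable (r n) (guardPost v away
      (hObs G (cutVertexStrategy v away F) r 0) (hObs G (cutVertexStrategy v away F) r 1)))
    (m : ℕ) : hObs G (cutVertexStrategy v away F) r (3 + m) = some (r (3 + m)) := by
  induction m using Nat.strong_induction_on with
  | _ m ih =>
  refine (hObs_eq_none_or.resolve_left fun hnone => ?_)
  have hseen : v ∉ sightings v (hObsList G (cutVertexStrategy v away F) r (3 + m)) := by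
    simp only [sightings_hObsList_three_add, List.mem_map, List.mem_range, not_exists, not_and]
    intro j hj
    rw [ih j hj, Option.getD_some]
    exact hrv _
  have hguard := adj_of_hObs_eq_none hnone (Fin.last k)
  rw [cutVertexStrategy, Fin.snoc_last, guardPos, if_neg hseen, hObsList_three_add,
    guardRoute_cons_cons_cons] at hguard
  exact hpost _ (by omega)
    (reachable_deleteIncidenceSet_of_adj (hrv _) (hadj _).ne' hguard.symm)

variable (hsep : ∀ u, u ≠ v → ¬(G.deleteIncidenceSet v).Reachable u (away u))
include hsep

theorem not_reachable_guardPost (hr : IsTrajectory G r) (hrv : ∀ n, r n ≠ v) :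
    ¬(G.deleteIncidenceSet v).Reachable (r 1) (guardPost v away
      (hObs G (cutVertexStrategy v away F) r 0) (hObs G (cutVertexStrategy v away F) r 1)) := by
  rcases hObs_eq_none_or (G := G) (F := cutVertexStrategy v away F) (r := r) (n := 0)
    with h0 | h0
  · rcases hObs_eq_none_or (G := G) (F := cutVertexStrategy v away F) (r := r) (n := 1)
      with h1 | h1
    · have hadj1 : G.Adj (away v) (r 1) := by
        simpa [cutVertexStrategy, guardPos, hObsList_one, h0, guardRoute, sightings]
          using adj_of_hObs_eq_none h1 (Fin.last k)
      simp only [h0, h1, guardPost, Option.or, Option.getD]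
      exact fun h => hsep (away v) (hadj v).ne'
        ((reachable_deleteIncidenceSet_of_adj (hrv 1) (hadj v).ne' hadj1.symm).symm.trans h)
    · simpa [h0, h1, guardPost] using hsep _ (hrv 1)
  · simp only [h0, guardPost, Option.or, Option.getD]
    exact fun h => hsep _ (hrv 0) ((hr.reachable_deleteIncidenceSet hrv zero_le_one).trans h)

theorem not_evades_cutVertexStrategy (hF : CatchesAll G F) (hF0 : F [] = fun _ => v)
    (hr : IsTrajectory G r) : ¬Evades G (cutVertexStrategy v away F) r := by
  intro he
  have : Nonempty V := ⟨v⟩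
  have hrv := he.ne_cutVertex hF.pos hF0
  have hpost n (hn : 1 ≤ n) := fun h => not_reachable_guardPost (F := F) hadj hsep hr hrv
    ((hr.reachable_deleteIncidenceSet hrv hn).trans h)
  have hseen m : sightings v (hObsList G (cutVertexStrategy v away F) r (3 + m)) =
      robberHist (fun j => r (3 + j)) m := by
    simp [sightings_hObsList_three_add, hObs_three_add_eq_some hadj hrv hpost, robberHist]
  obtain ⟨m, i, hcatch⟩ := hF _ (hr.shift 3)
  have hmain := he (3 + m) i.castSucc
  rw [cutVertexStrategy, cutVertexStrategy, Fin.snoc_castSucc, Fin.snoc_castSucc, hseen,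
    add_assoc, hseen] at hmain
  exact hcatch.elim hmain.1 hmain.2

end Capture

theorem CopsWin.hCopsWin_succ (h : CopsWin G k) (hG : G.Connected) {v x y : V} (hx : x ≠ v)
    (hy : y ≠ v) (hxy : ¬(G.deleteIncidenceSet v).Reachable x y) : HCopsWin G (k + 1) := by
  classical
  obtain ⟨away, hadj, hsep⟩ := hG.exists_away hx hy hxy
  obtain ⟨F, hlegal, hwin, hF0⟩ := h.exists_strategy_start hG fun _ => v
  refine ⟨cutVertexStrategy v away F, isLegalStrategy_cutVertexStrategy hadj hlegal,
    fun r hr => ?_⟩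
  by_contra! hno
  exact not_evades_cutVertexStrategy hadj hsep hwin hF0 hr hno

theorem hCopsWin_succ_of_forall_eq {v : V} (h : ∀ x, x = v) : HCopsWin G (k + 1) :=
  ⟨fun _ _ => v, fun _ _ _ => CRStep.refl G v, fun r _ => ⟨0, 0, Or.inl (h (r 0)).symm⟩⟩

end CopsAndRobbers

/-- If a finite connected graph `G` contains a cut vertex, then
`c_H(G) ≤ c(G) + 1`. -/
theorem hyperopicCopNumber_le_of_cutVertex {V : Type*} [Fintype V]
    (G : SimpleGraph V) (hG : G.Connected) (v : V)
    (hv : ¬ (G.induce ({v}ᶜ : Set V)).Connected) :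
    hyperopicCopNumber G ≤ copNumber G + 1 := by
  have hcop : CopsWin G (copNumber G) :=
    Nat.sInf_mem (s := {k | CopsWin G k}) ⟨_, copsWin_card G⟩
  refine Nat.sInf_le ?_
  by_cases hne : ∃ x, x ≠ v
  · obtain ⟨x, hx⟩ := hne
    obtain ⟨y, hy, hxy⟩ := exists_not_reachable_deleteIncidenceSet hv hx
    exact hcop.hCopsWin_succ hG hx hy hxy
  · exact hCopsWin_succ_of_forall_eq (not_exists_not.1 hne)
end

section
/- If a finite connected graph G has diameter at least 3, then c_H(G) ≤ c(G) + 2. -/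
/-!
Two cops parked at vertices `u`, `v` with `dist u v = diam G ≥ 3` have no common neighbour, so the
robber is never adjacent to every cop and hence is always visible. The remaining `c(G)` cops can
then play a winning strategy of ordinary Cops and Robbers on the (complete) observed history.
-/

theorem copsWin_nat_card {V : Type*} [Finite V] (G : SimpleGraph V) : CopsWin G (Nat.card V) :=
  ⟨fun _ => (Finite.equivFin V).symm, fun _ _ _ => Or.inl rfl,
    fun r _ => ⟨0, Finite.equivFin V (r 0), Or.inl (by simp)⟩⟩

theorem copsWin_copNumber {V : Type*} [Finite V] (G : SimpleGraph V) : CopsWin G (copNumber G) :=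
  Nat.sInf_mem (s := {k | CopsWin G k}) ⟨_, copsWin_nat_card G⟩

theorem robberHist_succ {V : Type*} (r : ℕ → V) (n : ℕ) :
    robberHist r (n + 1) = robberHist r n ++ [r n] := by
  simp [robberHist, List.range_succ]

theorem List.reduceOption_map_some {α : Type*} (l : List α) : (l.map some).reduceOption = l := by
  simp [List.reduceOption]

theorem hObsList_eq_map_some {V : Type*} (G : SimpleGraph V) {k : ℕ}
    (F : List (Option V) → Fin k → V) (hF : ∀ l w, ∃ i, ¬ G.Adj (F l i) w) (r : ℕ → V) (n : ℕ) :
    hObsList G F r n = (robberHist r n).map some := by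
  induction n with
  | zero => rfl
  | succ n ih =>
    obtain ⟨i, hi⟩ := hF (hObsList G F r n) (r n)
    rw [hObsList, if_neg (not_forall.2 ⟨i, hi⟩), ih, robberHist_succ, List.map_append,
      List.map_singleton]

def guardedStrategy {V : Type*} {k m : ℕ} (F : List V → Fin k → V) (g : Fin m → V) :
    List (Option V) → Fin (k + m) → V :=
  fun l => Fin.append (F l.reduceOption) g

theorem guardedStrategy_step {V : Type*} (G : SimpleGraph V) {k m : ℕ} {F : List V → Fin k → V}
    (hF : ∀ l x i, CRStep G (F l i) (F (l ++ [x]) i)) (g : Fin m → V) (l : List (Option V))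
    (o : Option V) (i : Fin (k + m)) :
    CRStep G (guardedStrategy F g l i) (guardedStrategy F g (l ++ [o]) i) := by
  refine Fin.addCases (fun i => ?_) (fun j => ?_) i
  · cases o with
    | none => simp [guardedStrategy, CRStep, List.reduceOption_append]
    | some x => simpa [guardedStrategy, List.reduceOption_append] using hF l.reduceOption x i
  · simp [guardedStrategy, CRStep]

theorem hCopsWin_add_of_copsWin {V : Type*} (G : SimpleGraph V) {k m : ℕ} (h : CopsWin G k)
    (g : Fin m → V) (hg : ∀ w, ∃ j, ¬ G.Adj (g j) w) : HCopsWin G (k + m) := by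
  obtain ⟨F, hFstep, hFwin⟩ := h
  have hvisible : ∀ l w, ∃ i, ¬ G.Adj (guardedStrategy F g l i) w := fun l w =>
    (hg w).elim fun j hj => ⟨Fin.natAdd k j, by simpa [guardedStrategy] using hj⟩
  have hsimulate : ∀ r n i, guardedStrategy F g (hObsList G (guardedStrategy F g) r n)
      (Fin.castAdd m i) = F (robberHist r n) i := fun r n i => by
    simp [guardedStrategy, hObsList_eq_map_some G _ hvisible, List.reduceOption_map_some]
  refine ⟨guardedStrategy F g, guardedStrategy_step G hFstep g, fun r hr => ?_⟩
  obtain ⟨n, i, hcatch⟩ := hFwin r hr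
  exact ⟨n, Fin.castAdd m i, by simpa only [hsimulate] using hcatch⟩

theorem SimpleGraph.not_adj_of_adj_of_three_le_dist {V : Type*} {G : SimpleGraph V} {u v w : V}
    (huv : 3 ≤ G.dist u v) (huw : G.Adj u w) : ¬ G.Adj w v := fun hwv =>
  absurd ((G.dist_le (.cons huw (.cons hwv .nil))).trans_lt (by simp)) huv.not_gt

theorem hyperopicCopNumber_le_of_three_le_diam_general {V : Type*} [Fintype V]
    (G : SimpleGraph V) (hd : 3 ≤ G.diam) :
    hyperopicCopNumber G ≤ copNumber G + 2 := by
  have : Nontrivial V := G.nontrivial_of_diam_ne_zero (by omega)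
  obtain ⟨u, v, huv⟩ := G.exists_dist_eq_diam
  have hguard : ∀ w, ∃ j, ¬ G.Adj (![u, v] j) w := fun w => by
    by_cases huw : G.Adj u w
    · exact ⟨1, fun hvw => G.not_adj_of_adj_of_three_le_dist (huv ▸ hd) huw hvw.symm⟩
    · exact ⟨0, huw⟩
  exact Nat.sInf_le (hCopsWin_add_of_copsWin G (copsWin_copNumber G) ![u, v] hguard)

/-- If a finite connected graph `G` has diameter at least 3, then
`c_H(G) ≤ c(G) + 2`. -/
theorem hyperopicCopNumber_le_of_three_le_diam {V : Type*} [Fintype V]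
    (G : SimpleGraph V) (hG : G.Connected) (hd : 3 ≤ G.diam) :
    hyperopicCopNumber G ≤ copNumber G + 2 :=
  hyperopicCopNumber_le_of_three_le_diam_general G hd
end

section
/- For all integers r, s ≥ 2, the join of the complete graph K_r with the empty graph on s vertices satisfies c_H(K_r ∨ \overline{K_s}) = ⌊r/2⌋ + 1. -/
/-- The join `G ∨ J` of two graphs on disjoint vertex sets: disjoint copies of `G` and `J`
together with all edges between them. -/
def graphJoin {V W : Type*} (G : SimpleGraph V) (J : SimpleGraph W) :
    SimpleGraph (V ⊕ W) where
  Adj x y :=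
    match x, y with
    | Sum.inl a, Sum.inl b => G.Adj a b
    | Sum.inr a, Sum.inr b => J.Adj a b
    | _, _ => True
  symm := by
    constructor
    rintro (a | a) (b | b) h
    · exact G.adj_symm h
    · trivial
    · trivial
    · exact J.adj_symm h
  loopless := by
    constructor
    rintro (a | a) h
    · exact G.irrefl h
    · exact J.irrefl h


/-!
Every clique vertex of `K_r ∨ K̄_s` is universal. With `⌊r/2⌋ + 1` cops, one cop sits on an
independent vertex and the others on half of the clique. A robber who is seen is then caught at
once by a clique cop, and a robber who is not seen is on the other half of the clique, which all
the cops cover with their next move.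

Against `k ≤ r/2` cops the robber stays invisible forever, so the cops' moves are fixed in
advance. In each round he goes to a clique vertex that no cop occupies now or after the cops'
next move; if the `2k` cop positions use up the whole clique, all cops are on the clique and he
waits on an independent vertex instead, which is adjacent to every cop.
-/

open Finset Sum

section HyperopicGame

variable {V : Type*} {G : SimpleGraph V}

open Classical in
theorem hCopsWin_of_one_round {k : ℕ} (p : Fin k → V) (f : Option V → Fin k → V)
    (hmove : ∀ o i, CRStep G (p i) (f o i))
    (hunseen : ∀ v, (∀ i, G.Adj (p i) v) → v ∈ Set.range (f none))
    (hseen : ∀ v, (¬ ∀ i, G.Adj (p i) v) → v ∈ Set.range (f (some v))) :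
    HCopsWin G k := by
  let F : List (Option V) → Fin k → V
    | [] => p
    | o :: _ => f o
  refine ⟨F, ?_, fun rob _ => ?_⟩
  · rintro (_ | _) o i
    · exact hmove o i
    · exact Or.inl rfl
  · have hobs : hObsList G F rob 1 =
        [if ∀ i, G.Adj (p i) (rob 0) then none else some (rob 0)] := rfl
    suffices ∃ i, F (hObsList G F rob 1) i = rob 0 from
      ⟨0, this.imp fun _ => Or.inr⟩
    by_cases h : ∀ i, G.Adj (p i) (rob 0)
    · simpa [hobs, h, F] using hunseen _ h
    · simpa [hobs, h, F] using hseen _ h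

theorem hObsList_eq_replicate_none {k : ℕ} {F : List (Option V) → Fin k → V} {rob : ℕ → V}
    (h : ∀ n i, G.Adj (F (List.replicate n none) i) (rob n)) (n : ℕ) :
    hObsList G F rob n = List.replicate n none := by
  induction n with
  | zero => rfl
  | succ n ih => rw [hObsList, ih, if_pos (h n), List.replicate_succ']

theorem exists_adj_forall_ne_of_universal {k : ℕ} {U : Finset V}
    (hU : ∀ u ∈ U, ∀ v, v ≠ u → G.Adj u v) (hk : 2 * k ≤ #U) {w : V} (hw : w ∉ U)
    (p q : Fin k → V) : ∃ x ∈ U.cons w hw, ∀ i, G.Adj (p i) x ∧ q i ≠ x := by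
  classical
  by_cases hfree : ∃ u ∈ U, ∀ i, p i ≠ u ∧ q i ≠ u
  · obtain ⟨u, hu, hpq⟩ := hfree
    exact ⟨u, mem_cons_of_mem hu, fun i => ⟨(hU u hu _ (hpq i).1).symm, (hpq i).2⟩⟩
  · have hcover : U ⊆ univ.image p ∪ univ.image q := by
      intro u hu
      by_contra hu'
      exact hfree ⟨u, hu, fun i => ⟨fun h => hu' (by simp [← h]), fun h => hu' (by simp [← h])⟩⟩
    have hU_eq : U = univ.image p ∪ univ.image q := by
      refine eq_of_subset_of_card_le hcover ?_
      calc #(univ.image p ∪ univ.image q) ≤ #(univ.image p) + #(univ.image q) :=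
            card_union_le _ _
        _ ≤ k + k := add_le_add (card_image_le.trans (by simp)) (card_image_le.trans (by simp))
        _ ≤ #U := by omega
    have hp : ∀ i, p i ∈ U := fun i => hU_eq ▸ by simp
    have hq : ∀ i, q i ∈ U := fun i => hU_eq ▸ by simp
    exact ⟨w, mem_cons_self _ _, fun i =>
      ⟨hU _ (hp i) w (ne_of_mem_of_not_mem (hp i) hw).symm, ne_of_mem_of_not_mem (hq i) hw⟩⟩

theorem crStep_of_mem_cons_of_universal {U : Finset V}
    (hU : ∀ u ∈ U, ∀ v, v ≠ u → G.Adj u v) {w : V} (hw : w ∉ U) {x y : V}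
    (hx : x ∈ U.cons w hw) (hy : y ∈ U.cons w hw) : CRStep G x y := by
  by_cases hxy : x = y
  · exact Or.inl hxy
  rcases mem_cons.1 hx with rfl | hx
  · exact Or.inr (hU y ((mem_cons.1 hy).resolve_left (Ne.symm hxy)) x hxy).symm
  · exact Or.inr (hU x hx y (Ne.symm hxy))

theorem not_hCopsWin_of_universal {k : ℕ} (U : Finset V)
    (hU : ∀ u ∈ U, ∀ v, v ≠ u → G.Adj u v) (hk : 2 * k ≤ #U) {w : V} (hw : w ∉ U) :
    ¬ HCopsWin G k := by
  rintro ⟨F, -, hwin⟩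
  choose rob hrob_mem hrob using fun n =>
    exists_adj_forall_ne_of_universal hU hk hw
      (F (List.replicate n none)) (F (List.replicate (n + 1) none))
  have hobs := hObsList_eq_replicate_none (fun n i => (hrob n i).1)
  have hstep : ∀ n, CRStep G (rob n) (rob (n + 1)) := fun n =>
    crStep_of_mem_cons_of_universal hU hw (hrob_mem n) (hrob_mem (n + 1))
  obtain ⟨n, i, hcap | hcap⟩ := hwin rob hstep
  · rw [hobs] at hcap
    exact (hrob n i).1.ne hcap
  · rw [hobs] at hcap
    exact (hrob n i).2 hcap

end HyperopicGame

section Join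

variable {V W : Type*}

theorem graphJoin_top_adj_inl (J : SimpleGraph W) {a : V} {x : V ⊕ W} (hx : x ≠ inl a) :
    (graphJoin ⊤ J).Adj (inl a) x := by
  rcases x with b | b
  · exact fun h => hx (h ▸ rfl)
  · trivial

theorem crStep_graphJoin_top_inl (J : SimpleGraph W) (a : V) (x : V ⊕ W) :
    CRStep (graphJoin ⊤ J) (inl a) x := by
  by_cases hx : x = inl a
  · exact Or.inl hx.symm
  · exact Or.inr (graphJoin_top_adj_inl J hx)

theorem not_hCopsWin_graphJoin_top [Fintype V] [Nonempty W] (J : SimpleGraph W) {k : ℕ}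
    (hk : 2 * k ≤ Fintype.card V) : ¬ HCopsWin (graphJoin (⊤ : SimpleGraph V) J) k := by
  obtain ⟨w⟩ := ‹Nonempty W›
  refine not_hCopsWin_of_universal (univ.map Function.Embedding.inl) ?_ (by simpa using hk)
    (w := inr w) (by simp)
  intro u hu v hv
  obtain ⟨a, -, rfl⟩ := mem_map.1 hu
  exact graphJoin_top_adj_inl J hv

theorem hCopsWin_graphJoin_top_bot {r : ℕ} (hr : 2 ≤ r) [Nonempty W] :
    HCopsWin (graphJoin (⊤ : SimpleGraph (Fin r)) (⊥ : SimpleGraph W)) (r / 2 + 1) := by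
  obtain ⟨w₀⟩ := ‹Nonempty W›
  -- an unseen robber is on a clique vertex `u ≥ r/2`, and `Fin.rev` sends the cops to the top
  -- `r/2 + 1` clique vertices
  have hhalf : r / 2 + 1 ≤ r := by omega
  refine hCopsWin_of_one_round
    (Fin.cons (inr w₀) fun j => inl (Fin.castLE (by omega) j))
    (fun
      | none => fun i => inl (Fin.rev (Fin.castLE hhalf i))
      | some v => Fin.cons (inr w₀) fun _ => v) ?_ ?_ ?_
  · intro o i
    refine Fin.cases ?_ (fun j => crStep_graphJoin_top_inl _ _ _) i
    cases o with
    | none => exact Or.inr trivial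
    | some v => exact Or.inl rfl
  · rintro (u | w) hadj
    · have hu : r / 2 ≤ u := by
        by_contra! hu
        exact hadj (Fin.succ ⟨u, hu⟩) (by simp)
      refine ⟨⟨r - 1 - u, by omega⟩, congrArg inl (Fin.ext ?_)⟩
      simp only [Fin.val_rev, Fin.val_castLE]
      omega
    · exact (hadj 0).elim
  · intro v _
    exact ⟨Fin.succ ⟨0, by omega⟩, Fin.cons_succ _ _ _⟩

end Join

/-- For all integers `r, s ≥ 2`, the join of the complete graph `K_r`
with the empty graph on `s` vertices satisfies `c_H(K_r ∨ K̄_s) = ⌊r/2⌋ + 1`. -/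
theorem hyperopicCopNumber_join_complete_empty (r s : ℕ) (hr : 2 ≤ r) (hs : 2 ≤ s) :
    hyperopicCopNumber
        (graphJoin (⊤ : SimpleGraph (Fin r)) (⊥ : SimpleGraph (Fin s))) =
      r / 2 + 1 := by
  have : Nonempty (Fin s) := ⟨⟨0, by omega⟩⟩
  have hwin := hCopsWin_graphJoin_top_bot (W := Fin s) hr
  refine le_antisymm (Nat.sInf_le hwin) (le_csInf ⟨_, hwin⟩ fun k hk => ?_)
  by_contra hlt
  exact not_hCopsWin_graphJoin_top _ (by rw [Fintype.card_fin]; omega) hk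
end
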